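/- Consider the residual-sketch iteration with a general parameter matrix: given A ∈ ℝ^{m×n}, b ∈ ℝ^m, x₀ ∈ ℝ^n, and a symmetric positive definite W ∈ ℝ^{n×n}, set r₀ = b − A x₀ and for j ≥ 1 let S_j = [r₀ … r_{j−1}], p_j = W Aᵀ S_j (S_jᵀ A W Aᵀ S_j)⁻¹ S_jᵀ r_{j−1}, x_j = x_{j−1} + p_j, r_j = b − A x_j, assuming the Gram matrices S_jᵀ A W Aᵀ S_j are invertible for j = 1,…,k, with k ≥ 2. Set y_k = Aᵀ r_{k−1}, ρ = ‖r_{k−1}‖₂², θ = p_{k−1}ᵀ W⁻¹ p_{k−1}, φ = y_kᵀ W y_k. Then θ φ − ρ² > 0 and p_k = β p_{k−1} + γ W y_k with β = ρ² / (θ φ − ρ²) and γ = θ ρ / (θ φ − ρ²). -/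

import Mathlib

open Matrix

/-- `colCat r k` is the matrix `[r 0 … r (k-1)]` whose `l`-th column is `r l`. -/
def colCat {m : ℕ} (r : ℕ → Fin m → ℝ) (k : ℕ) : Matrix (Fin m) (Fin k) ℝ :=
  Matrix.of fun i l => r l.val i

namespace SketchAux

lemma dot_mulVec_symm {n m : ℕ} (M : Matrix (Fin n) (Fin m) ℝ) (u : Fin n → ℝ) (v : Fin m → ℝ) :
    u ⬝ᵥ M.mulVec v = Mᵀ.mulVec u ⬝ᵥ v := by
  rw [dotProduct_mulVec, ← vecMul_transpose, transpose_transpose]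

lemma dot_self_pos {n : ℕ} (v : Fin n → ℝ) (h : v ≠ 0) : 0 < v ⬝ᵥ v := by
  rcases eq_or_lt_of_le (Finset.sum_nonneg fun i _ => mul_self_nonneg (v i)) with h0 | h0
  · exact absurd ((dotProduct_self_eq_zero).mp h0.symm) h
  · exact h0

lemma dotProduct_sum' {n : ℕ} {ι : Type*} (s : Finset ι) (u : Fin n → ℝ) (f : ι → Fin n → ℝ) :
    u ⬝ᵥ (∑ i ∈ s, f i) = ∑ i ∈ s, u ⬝ᵥ f i := by
  simp only [dotProduct, Finset.sum_apply, Finset.mul_sum]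
  exact Finset.sum_comm

lemma colCat_tr_mulVec {m k : ℕ} (r : ℕ → Fin m → ℝ) (v : Fin m → ℝ) (l : Fin k) :
    (colCat r k)ᵀ.mulVec v l = r l ⬝ᵥ v := by
  simp [colCat, Matrix.mulVec, Matrix.transpose_apply, dotProduct, mul_comm]

lemma colCat_mulVec {m k : ℕ} (r : ℕ → Fin m → ℝ) (c : Fin k → ℝ) :
    (colCat r k).mulVec c = ∑ l : Fin k, c l • r l.val := by
  funext i
  simp [colCat, Matrix.mulVec, dotProduct, Finset.sum_apply, mul_comm]

lemma colCat_single {m k : ℕ} (r : ℕ → Fin m → ℝ) (j : Fin k) :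
    (colCat r k).mulVec (Pi.single j 1) = r j.val := by
  funext i
  simp [Matrix.mulVec_single, colCat]

/-- padding a coefficient vector with zeros -/
lemma colCat_pad {m j k : ℕ} (hjk : j ≤ k) (r : ℕ → Fin m → ℝ) (c : Fin j → ℝ) :
    (colCat r k).mulVec (fun i : Fin k => if h : i.val < j then c ⟨i.val, h⟩ else 0)
      = (colCat r j).mulVec c := by
  rw [colCat_mulVec, colCat_mulVec]
  have h1 : ∀ i : Fin k, (if h : i.val < j then c ⟨i.val, h⟩ else 0) • r i.val
      = (fun l : ℕ => if h : l < j then c ⟨l, h⟩ • r l else 0) i.val := by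
    intro i
    by_cases h : i.val < j
    · simp [h]
    · simp [h]
  rw [Finset.sum_congr rfl (fun i _ => h1 i)]
  have h2 : ∀ l : Fin j, c l • r l.val = (fun l : ℕ => if h : l < j then c ⟨l, h⟩ • r l else 0) l.val := by
    intro l; simp [l.isLt]
  rw [Finset.sum_congr rfl (fun l _ => h2 l)]
  rw [Fin.sum_univ_eq_sum_range (fun l : ℕ => if h : l < j then c ⟨l, h⟩ • r l else 0) k,
    Fin.sum_univ_eq_sum_range (fun l : ℕ => if h : l < j then c ⟨l, h⟩ • r l else 0) j]
  refine (Finset.sum_subset (Finset.range_subset_range.2 hjk) ?_).symm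
  intro i hi hij
  simp only [Finset.mem_range] at hi hij
  simp [hij]

/-- quadratic form through a rectangular factor -/
lemma quad_eq {m n j : ℕ} (A : Matrix (Fin m) (Fin n) ℝ) (W : Matrix (Fin n) (Fin n) ℝ)
    (B : Matrix (Fin m) (Fin j) ℝ) (c : Fin j → ℝ) :
    c ⬝ᵥ (Bᵀ * A * W * Aᵀ * B).mulVec c
      = ((Aᵀ * B).mulVec c) ⬝ᵥ W.mulVec ((Aᵀ * B).mulVec c) := by
  have hB : Bᵀ * A * W * Aᵀ * B = (Aᵀ * B)ᵀ * (W * (Aᵀ * B)) := by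
    rw [transpose_mul, transpose_transpose]
    simp only [Matrix.mul_assoc]
  rw [hB, ← Matrix.mulVec_mulVec, dot_mulVec_symm, transpose_transpose,
    ← Matrix.mulVec_mulVec, Matrix.mulVec_mulVec, Matrix.mulVec_mulVec]

lemma mulVec_sum' {a b : ℕ} (M : Matrix (Fin a) (Fin b) ℝ) {ι : Type*} (s : Finset ι)
    (f : ι → Fin b → ℝ) : M.mulVec (∑ i ∈ s, f i) = ∑ i ∈ s, M.mulVec (f i) := by
  funext i
  simp only [Matrix.mulVec, dotProduct, Finset.sum_apply, Finset.mul_sum]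
  exact Finset.sum_comm

lemma dot_colCat_tr {m k : ℕ} (r : ℕ → Fin m → ℝ) (c : Fin k → ℝ) (v : Fin m → ℝ) :
    c ⬝ᵥ (colCat r k)ᵀ.mulVec v = ∑ l : Fin k, c l * (r l ⬝ᵥ v) := by
  simp [dotProduct, colCat_tr_mulVec]

end SketchAux

open SketchAux in
/-- One-step recursion of the residual-sketch iteration with a general symmetric
positive definite parameter matrix `W`: with `y_k = Aᵀ r_{k−1}`,
`ρ = ‖r_{k−1}‖²`, `θ = p_{k−1}ᵀ W⁻¹ p_{k−1}`, `φ = y_kᵀ W y_k`, one has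
`θφ − ρ² > 0` and `p_k = β p_{k−1} + γ W y_k` with `β = ρ²/(θφ − ρ²)` and
`γ = θρ/(θφ − ρ²)`. -/
theorem stmt18 (m n k : ℕ) (hk : 2 ≤ k)
    (A : Matrix (Fin m) (Fin n) ℝ) (b : Fin m → ℝ)
    (W : Matrix (Fin n) (Fin n) ℝ) (hW : W.PosDef)
    (x p : ℕ → Fin n → ℝ) (r : ℕ → Fin m → ℝ)
    (hr : ∀ j, r j = b - A.mulVec (x j))
    (hinv : ∀ j, 1 ≤ j → j ≤ k → IsUnit ((colCat r j)ᵀ * A * W * Aᵀ * colCat r j))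
    (hp : ∀ j, 1 ≤ j → j ≤ k →
      p j = (W * Aᵀ * colCat r j).mulVec
        (((colCat r j)ᵀ * A * W * Aᵀ * colCat r j)⁻¹.mulVec
          ((colCat r j)ᵀ.mulVec (r (j - 1)))))
    (hx : ∀ j, 1 ≤ j → j ≤ k → x j = x (j - 1) + p j)
    (y : Fin n → ℝ) (hy : y = Aᵀ.mulVec (r (k - 1)))
    (ρ θ φ : ℝ)
    (hρ : ρ = r (k - 1) ⬝ᵥ r (k - 1))
    (hθ : θ = p (k - 1) ⬝ᵥ W⁻¹.mulVec (p (k - 1)))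
    (hφ : φ = y ⬝ᵥ W.mulVec y) :
    0 < θ * φ - ρ ^ 2 ∧
      p k = (ρ ^ 2 / (θ * φ - ρ ^ 2)) • p (k - 1) +
        (θ * ρ / (θ * φ - ρ ^ 2)) • W.mulVec y := by
  obtain ⟨K, rfl⟩ : ∃ K, k = K + 2 := ⟨k - 2, by omega⟩
  clear hk
  have hWt : Wᵀ = W := hW.isHermitian.eq
  have hWpos : ∀ v : Fin n → ℝ, v ≠ 0 → 0 < v ⬝ᵥ W.mulVec v := fun v hv => by
    simpa using hW.dotProduct_mulVec_pos hv
  -- cancellation facts for the Gram matrices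
  have hGinv : ∀ j, 1 ≤ j → j ≤ K + 2 → ∀ v : Fin j → ℝ,
      ((colCat r j)ᵀ * A * W * Aᵀ * colCat r j).mulVec
        (((colCat r j)ᵀ * A * W * Aᵀ * colCat r j)⁻¹.mulVec v) = v := by
    intro j h1 h2 v
    rw [Matrix.mulVec_mulVec,
      Matrix.mul_nonsing_inv _ ((Matrix.isUnit_iff_isUnit_det _).mp (hinv j h1 h2)),
      Matrix.one_mulVec]
  have hGinv' : ∀ j, 1 ≤ j → j ≤ K + 2 → ∀ v : Fin j → ℝ,
      ((colCat r j)ᵀ * A * W * Aᵀ * colCat r j)⁻¹.mulVec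
        (((colCat r j)ᵀ * A * W * Aᵀ * colCat r j).mulVec v) = v := by
    intro j h1 h2 v
    rw [Matrix.mulVec_mulVec,
      Matrix.nonsing_inv_mul _ ((Matrix.isUnit_iff_isUnit_det _).mp (hinv j h1 h2)),
      Matrix.one_mulVec]
  -- projection property : r i ⬝ᵥ A p j = r i ⬝ᵥ r (j-1)
  have hproj : ∀ j, 1 ≤ j → j ≤ K + 2 → ∀ i : Fin j,
      r i ⬝ᵥ A.mulVec (p j) = r i ⬝ᵥ r (j - 1) := by
    intro j h1 h2 i
    have h3 : (colCat r j)ᵀ.mulVec (A.mulVec (p j)) = (colCat r j)ᵀ.mulVec (r (j - 1)) := by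
      rw [hp j h1 h2, Matrix.mulVec_mulVec, Matrix.mulVec_mulVec]
      have : (colCat r j)ᵀ * A * (W * Aᵀ * colCat r j)
          = (colCat r j)ᵀ * A * W * Aᵀ * colCat r j := by
        simp only [Matrix.mul_assoc]
      rw [this, hGinv j h1 h2]
    have := congrFun h3 i
    rwa [colCat_tr_mulVec, colCat_tr_mulVec] at this
  -- residual recursion
  have hrec : ∀ j, 1 ≤ j → j ≤ K + 2 → r j = r (j - 1) - A.mulVec (p j) := by
    intro j h1 h2
    rw [hr j, hr (j - 1), hx j h1 h2, Matrix.mulVec_add]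
    abel
  -- orthogonality of residuals
  have horth : ∀ i j : ℕ, i < j → j ≤ K + 2 → r i ⬝ᵥ r j = 0 := by
    intro i j hij hj
    have h1 : 1 ≤ j := by omega
    rw [hrec j h1 hj, dotProduct_sub, hproj j h1 hj ⟨i, hij⟩]
    simp
  -- injectivity of Aᵀ * S_j
  have hinj : ∀ j, 1 ≤ j → j ≤ K + 2 → ∀ c : Fin j → ℝ,
      (Aᵀ * colCat r j).mulVec c = 0 → c = 0 := by
    intro j h1 h2 c hc
    have hsplit : (colCat r j)ᵀ * A * W * Aᵀ * colCat r j
        = (colCat r j)ᵀ * A * W * (Aᵀ * colCat r j) := by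
      simp only [Matrix.mul_assoc]
    have h0 : ((colCat r j)ᵀ * A * W * Aᵀ * colCat r j).mulVec c = 0 := by
      rw [hsplit, ← Matrix.mulVec_mulVec, hc, Matrix.mulVec_zero]
    have := hGinv' j h1 h2 c
    rw [h0, Matrix.mulVec_zero] at this
    exact this.symm
  -- nonvanishing of residuals r j for j ≤ K + 1
  have hrne : ∀ j : ℕ, j ≤ K + 1 → r j ≠ 0 := by
    intro j hj h0
    have hcol : (Aᵀ * colCat r (K + 2)).mulVec (Pi.single (⟨j, by omega⟩ : Fin (K + 2)) 1) = 0 := by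
      rw [← Matrix.mulVec_mulVec, colCat_single]
      show Aᵀ.mulVec (r j) = 0
      rw [h0, Matrix.mulVec_zero]
    have := hinj (K + 2) (by omega) le_rfl _ hcol
    have := congrFun this ⟨j, by omega⟩
    simp at this
  have hrpos : ∀ j : ℕ, j ≤ K + 1 → 0 < r j ⬝ᵥ r j := fun j hj =>
    dot_self_pos _ (hrne j hj)
  -- symmetry of A W Aᵀ
  have hAWA : ∀ u v : Fin m → ℝ, u ⬝ᵥ (A * W * Aᵀ).mulVec v = v ⬝ᵥ (A * W * Aᵀ).mulVec u := by
    intro u v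
    rw [dot_mulVec_symm]
    have ht : (A * W * Aᵀ)ᵀ = A * W * Aᵀ := by
      rw [transpose_mul, transpose_mul, transpose_transpose, hWt]
      simp only [Matrix.mul_assoc]
    rw [ht, dotProduct_comm]
  -- positivity of diagonal coefficient of the projection coefficients
  have hcoeff : ∀ j, ∀ (h1 : 1 ≤ j) (h2 : j ≤ K + 2),
      0 < (((colCat r j)ᵀ * A * W * Aᵀ * colCat r j)⁻¹.mulVec
          ((colCat r j)ᵀ.mulVec (r (j - 1)))) ⟨j - 1, by omega⟩
        * (r (j - 1) ⬝ᵥ r (j - 1)) := by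
    intro j h1 h2
    set c := (((colCat r j)ᵀ * A * W * Aᵀ * colCat r j)⁻¹.mulVec
      ((colCat r j)ᵀ.mulVec (r (j - 1)))) with hc
    have hGc : ((colCat r j)ᵀ * A * W * Aᵀ * colCat r j).mulVec c
        = (colCat r j)ᵀ.mulVec (r (j - 1)) := hGinv j h1 h2 _
    have hrj : 0 < r (j - 1) ⬝ᵥ r (j - 1) := hrpos (j - 1) (by omega)
    have hcne : c ≠ 0 := by
      intro h0
      rw [h0, Matrix.mulVec_zero] at hGc
      have := congrFun hGc ⟨j - 1, by omega⟩
      rw [colCat_tr_mulVec] at this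
      simp only [Pi.zero_apply] at this
      rw [← this] at hrj
      exact lt_irrefl 0 hrj
    have hune : (Aᵀ * colCat r j).mulVec c ≠ 0 := by
      intro h0
      exact hcne (hinj j h1 h2 c h0)
    have hq : 0 < c ⬝ᵥ ((colCat r j)ᵀ * A * W * Aᵀ * colCat r j).mulVec c := by
      rw [quad_eq]
      exact hWpos _ hune
    rw [hGc, dot_colCat_tr] at hq
    have hsum : ∑ l : Fin j, c l * (r l ⬝ᵥ r (j - 1))
        = c ⟨j - 1, by omega⟩ * (r (j - 1) ⬝ᵥ r (j - 1)) := by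
      refine Finset.sum_eq_single_of_mem _ (Finset.mem_univ _) ?_
      intro l _ hl
      have hlv : l.val < j - 1 := by
        rcases lt_or_ge l.val (j - 1) with h | h
        · exact h
        · exfalso; apply hl; apply Fin.ext; simp; omega
      rw [horth l.val (j - 1) hlv (by omega), mul_zero]
    rwa [hsum] at hq
  -- Krylov-type orthogonality
  have hKry : ∀ i : ℕ, i + 1 ≤ K → r (K + 1) ⬝ᵥ (A * W * Aᵀ).mulVec (r i) = 0 := by
    intro i
    induction i using Nat.strong_induction_on with
    | _ i IH =>
      intro hi
      set c := (((colCat r (i + 1))ᵀ * A * W * Aᵀ * colCat r (i + 1))⁻¹.mulVec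
        ((colCat r (i + 1))ᵀ.mulVec (r i))) with hc
      have h1 : 1 ≤ i + 1 := by omega
      have h2 : i + 1 ≤ K + 2 := by omega
      have hpj : p (i + 1) = (W * Aᵀ * colCat r (i + 1)).mulVec c := hp (i + 1) h1 h2
      have hmm : A * (W * Aᵀ * colCat r (i + 1)) = A * W * Aᵀ * colCat r (i + 1) := by
        simp only [Matrix.mul_assoc]
      have hAp : A.mulVec (p (i + 1)) = (A * W * Aᵀ).mulVec ((colCat r (i + 1)).mulVec c) := by
        rw [hpj, Matrix.mulVec_mulVec, hmm, ← Matrix.mulVec_mulVec]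
      have hsum : r (K + 1) ⬝ᵥ A.mulVec (p (i + 1))
          = ∑ l : Fin (i + 1), c l * (r (K + 1) ⬝ᵥ (A * W * Aᵀ).mulVec (r l)) := by
        rw [hAp, colCat_mulVec, mulVec_sum', dotProduct_sum']
        congr 1
        funext l
        rw [Matrix.mulVec_smul, dotProduct_smul, smul_eq_mul]
      have hlhs : r (K + 1) ⬝ᵥ A.mulVec (p (i + 1)) = 0 := by
        have hrr : A.mulVec (p (i + 1)) = r i - r (i + 1) := by
          have := hrec (i + 1) h1 h2
          simp only [Nat.add_sub_cancel] at this
          rw [this]; abel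
        rw [hrr, dotProduct_sub, dotProduct_comm, horth i (K + 1) (by omega) (by omega),
          dotProduct_comm (r (K + 1)), horth (i + 1) (K + 1) (by omega) (by omega), sub_zero]
      have hsingle : ∑ l : Fin (i + 1), c l * (r (K + 1) ⬝ᵥ (A * W * Aᵀ).mulVec (r l))
          = c ⟨i, by omega⟩ * (r (K + 1) ⬝ᵥ (A * W * Aᵀ).mulVec (r i)) := by
        refine Finset.sum_eq_single_of_mem _ (Finset.mem_univ _) ?_
        intro l _ hl
        have hlv : l.val < i := by
          rcases lt_or_ge l.val i with h | h
          · exact h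
          · exfalso; apply hl; apply Fin.ext; simp; omega
        rw [IH l.val hlv (by omega), mul_zero]
      have hcne : c ⟨i, by omega⟩ ≠ 0 := by
        have := hcoeff (i + 1) h1 h2
        simp only [Nat.add_sub_cancel] at this
        intro h0
        rw [← hc] at this
        rw [h0, zero_mul] at this
        exact lt_irrefl 0 this
      have := hlhs.symm.trans (hsum.trans hsingle)
      exact (mul_eq_zero.mp this.symm).resolve_left hcne
  -- convenient defeq forms of the hypotheses
  have hy' : y = Aᵀ.mulVec (r (K + 1)) := hy
  have hρ' : ρ = r (K + 1) ⬝ᵥ r (K + 1) := hρ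
  have hθ' : θ = p (K + 1) ⬝ᵥ W⁻¹.mulVec (p (K + 1)) := hθ
  -- data at level K+1
  obtain ⟨c1, hc1⟩ : ∃ c : Fin (K + 1) → ℝ,
      c = (((colCat r (K + 1))ᵀ * A * W * Aᵀ * colCat r (K + 1))⁻¹.mulVec
        ((colCat r (K + 1))ᵀ.mulVec (r K))) := ⟨_, rfl⟩
  have hp1 : p (K + 1) = (W * Aᵀ * colCat r (K + 1)).mulVec c1 := by
    rw [hc1]; exact hp (K + 1) (by omega) (by omega)
  have hG1c1 : ((colCat r (K + 1))ᵀ * A * W * Aᵀ * colCat r (K + 1)).mulVec c1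
      = (colCat r (K + 1))ᵀ.mulVec (r K) := by
    rw [hc1]; exact hGinv (K + 1) (by omega) (by omega) _
  obtain ⟨u1, hu1⟩ : ∃ u : Fin n → ℝ, u = (Aᵀ * colCat r (K + 1)).mulVec c1 := ⟨_, rfl⟩
  have hpu : p (K + 1) = W.mulVec u1 := by
    rw [hp1, hu1, Matrix.mulVec_mulVec]
    simp only [Matrix.mul_assoc]
  have hWinv : W⁻¹ * W = 1 :=
    Matrix.nonsing_inv_mul W ((Matrix.isUnit_iff_isUnit_det W).mp hW.isUnit)
  have hθu : θ = u1 ⬝ᵥ W.mulVec u1 := by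
    rw [hθ', hpu, Matrix.mulVec_mulVec, hWinv, Matrix.one_mulVec, dotProduct_comm]
  have hρy : y ⬝ᵥ p (K + 1) = -ρ := by
    have h := hrec (K + 1) (by omega) (by omega)
    simp only [Nat.add_sub_cancel] at h
    have h2 : r (K + 1) ⬝ᵥ r (K + 1) = r (K + 1) ⬝ᵥ (r K - A.mulVec (p (K + 1))) := by
      rw [← h]
    rw [dotProduct_sub, dotProduct_comm (r (K + 1)) (r K), horth K (K + 1) (by omega) (by omega),
      dot_mulVec_symm, ← hy'] at h2
    rw [hρ', h2]; ring
  have hθc : θ = c1 ⟨K, by omega⟩ * (r K ⬝ᵥ r K) := by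
    rw [hθu, hu1, ← quad_eq, hG1c1, dot_colCat_tr]
    refine Finset.sum_eq_single_of_mem _ (Finset.mem_univ _) ?_
    intro l _ hl
    have hlv : l.val < K := by
      rcases lt_or_ge l.val K with h | h
      · exact h
      · exfalso; apply hl; apply Fin.ext; simp; omega
    rw [horth l.val K hlv (by omega), mul_zero]
  have hρpos : 0 < ρ := by rw [hρ']; exact hrpos (K + 1) le_rfl
  have hyne : y ≠ 0 := by
    intro h0
    have hcol : (Aᵀ * colCat r (K + 2)).mulVec
        (Pi.single (⟨K + 1, by omega⟩ : Fin (K + 2)) 1) = 0 := by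
      rw [← Matrix.mulVec_mulVec, colCat_single]
      show Aᵀ.mulVec (r (K + 1)) = 0
      rw [← hy', h0]
    have h := hinj (K + 2) (by omega) le_rfl _ hcol
    have := congrFun h ⟨K + 1, by omega⟩
    simp at this
  have hφpos : 0 < φ := by rw [hφ]; exact hWpos y hyne
  have hu1ne : u1 ≠ 0 := by
    intro h0
    have hp0 : p (K + 1) = 0 := by rw [hpu, h0, Matrix.mulVec_zero]
    have h := hrec (K + 1) (by omega) (by omega)
    simp only [Nat.add_sub_cancel] at h
    rw [hp0, Matrix.mulVec_zero, sub_zero] at h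
    have h2 : r K ⬝ᵥ r (K + 1) = 0 := horth K (K + 1) (by omega) (by omega)
    rw [← h, ← hρ'] at h2
    linarith
  have hθpos : 0 < θ := by rw [hθu]; exact hWpos u1 hu1ne
  have hc1K : c1 ⟨K, by omega⟩ ≠ 0 := by
    intro h0
    rw [h0, zero_mul] at hθc
    linarith
  -- Cauchy–Schwarz style positivity
  have he2 : u1 ⬝ᵥ W.mulVec y = -ρ := by
    rw [dot_mulVec_symm, hWt, ← hpu, dotProduct_comm, hρy]
  have he3 : y ⬝ᵥ W.mulVec u1 = -ρ := by
    rw [← hpu, hρy]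
  have hvW : (u1 + (ρ / φ) • y) ⬝ᵥ W.mulVec (u1 + (ρ / φ) • y) = θ - ρ ^ 2 / φ := by
    simp only [Matrix.mulVec_add, Matrix.mulVec_smul, dotProduct_add, add_dotProduct,
      dotProduct_smul, smul_dotProduct, smul_eq_mul, ← hθu, he2, he3, ← hφ]
    field_simp
    ring
  obtain ⟨pad, hpad⟩ : ∃ z : Fin (K + 2) → ℝ,
      z = fun i : Fin (K + 2) => if h : i.val < K + 1 then c1 ⟨i.val, h⟩ else 0 := ⟨_, rfl⟩
  have hpad2 : (colCat r (K + 2)).mulVec pad = (colCat r (K + 1)).mulVec c1 := by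
    rw [hpad]; exact colCat_pad (by omega) r c1
  have hpadK : pad ⟨K + 1, by omega⟩ = 0 := by rw [hpad]; simp
  have hsingle2 : (colCat r (K + 2)).mulVec
      (Pi.single (⟨K + 1, by omega⟩ : Fin (K + 2)) 1) = r (K + 1) := colCat_single r _
  have hvne : u1 + (ρ / φ) • y ≠ 0 := by
    intro h0
    have hkey : (Aᵀ * colCat r (K + 2)).mulVec
        (φ • pad + ρ • (Pi.single (⟨K + 1, by omega⟩ : Fin (K + 2)) 1 : Fin (K + 2) → ℝ)) = 0 := by
      rw [Matrix.mulVec_add, Matrix.mulVec_smul, Matrix.mulVec_smul,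
        ← Matrix.mulVec_mulVec, ← Matrix.mulVec_mulVec (Pi.single _ 1), hpad2, hsingle2,
        Matrix.mulVec_mulVec, ← hu1, ← hy']
      have hsc : φ • (u1 + (ρ / φ) • y) = φ • u1 + ρ • y := by
        rw [smul_add, smul_smul]
        congr 2
        field_simp
      rw [← hsc, h0, smul_zero]
    have h := hinj (K + 2) (by omega) le_rfl _ hkey
    have h2 := congrFun h ⟨K + 1, by omega⟩
    simp only [Pi.add_apply, Pi.smul_apply, hpadK, Pi.single_eq_same, smul_eq_mul, mul_zero,
      mul_one, zero_add, Pi.zero_apply] at h2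
    linarith
  have hD : 0 < θ * φ - ρ ^ 2 := by
    have h1 := hWpos _ hvne
    rw [hvW] at h1
    have h2 : φ * (θ - ρ ^ 2 / φ) = θ * φ - ρ ^ 2 := by
      field_simp
    nlinarith
  -- the τ coefficient
  have hmm1 : A * (W * Aᵀ * colCat r (K + 1)) = A * W * Aᵀ * colCat r (K + 1) := by
    simp only [Matrix.mul_assoc]
  have hAp1 : A.mulVec (p (K + 1)) = (A * W * Aᵀ).mulVec ((colCat r (K + 1)).mulVec c1) := by
    rw [hp1, Matrix.mulVec_mulVec, hmm1, ← Matrix.mulVec_mulVec]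
  have hτ : c1 ⟨K, by omega⟩ * (r (K + 1) ⬝ᵥ (A * W * Aᵀ).mulVec (r K)) = -ρ := by
    have hsum : r (K + 1) ⬝ᵥ A.mulVec (p (K + 1))
        = ∑ l : Fin (K + 1), c1 l * (r (K + 1) ⬝ᵥ (A * W * Aᵀ).mulVec (r l)) := by
      rw [hAp1, colCat_mulVec, mulVec_sum', dotProduct_sum']
      congr 1; funext l
      rw [Matrix.mulVec_smul, dotProduct_smul, smul_eq_mul]
    have hsingle : ∑ l : Fin (K + 1), c1 l * (r (K + 1) ⬝ᵥ (A * W * Aᵀ).mulVec (r l))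
        = c1 ⟨K, by omega⟩ * (r (K + 1) ⬝ᵥ (A * W * Aᵀ).mulVec (r K)) := by
      refine Finset.sum_eq_single_of_mem _ (Finset.mem_univ _) ?_
      intro l _ hl
      have hlv : l.val < K := by
        rcases lt_or_ge l.val K with h | h
        · exact h
        · exfalso; apply hl; apply Fin.ext; simp; omega
      rw [hKry l.val (by omega), mul_zero]
    have hlhs : r (K + 1) ⬝ᵥ A.mulVec (p (K + 1)) = -ρ := by
      rw [dot_mulVec_symm, ← hy', hρy]
    rw [← hsingle, ← hsum, hlhs]
  refine ⟨hD, ?_⟩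
  -- final assembly
  have hApr : A.mulVec (p (K + 1)) = r K - r (K + 1) := by
    have h := hrec (K + 1) (by omega) (by omega)
    simp only [Nat.add_sub_cancel] at h
    rw [h]; abel
  have hphi2 : r (K + 1) ⬝ᵥ (A * W * Aᵀ).mulVec (r (K + 1)) = φ := by
    rw [← Matrix.mulVec_mulVec, ← Matrix.mulVec_mulVec, dot_mulVec_symm, ← hy']
    exact hφ.symm
  obtain ⟨w, hwdef⟩ : ∃ z : Fin (K + 2) → ℝ, z = (ρ ^ 2 / (θ * φ - ρ ^ 2)) • pad
      + (θ * ρ / (θ * φ - ρ ^ 2)) •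
        (Pi.single (⟨K + 1, by omega⟩ : Fin (K + 2)) 1 : Fin (K + 2) → ℝ) := ⟨_, rfl⟩
  have hS2w : (colCat r (K + 2)).mulVec w
      = (ρ ^ 2 / (θ * φ - ρ ^ 2)) • ((colCat r (K + 1)).mulVec c1)
        + (θ * ρ / (θ * φ - ρ ^ 2)) • r (K + 1) := by
    rw [hwdef, Matrix.mulVec_add, Matrix.mulVec_smul, Matrix.mulVec_smul, hpad2, hsingle2]
  have hDne : θ * φ - ρ ^ 2 ≠ 0 := ne_of_gt hD
  have hGw : ((colCat r (K + 2))ᵀ * A * W * Aᵀ * colCat r (K + 2)).mulVec w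
      = (colCat r (K + 2))ᵀ.mulVec (r (K + 1)) := by
    have hsplit : (colCat r (K + 2))ᵀ * A * W * Aᵀ * colCat r (K + 2)
        = (colCat r (K + 2))ᵀ * (A * W * Aᵀ * colCat r (K + 2)) := by
      simp only [Matrix.mul_assoc]
    have hsplit2 : (A * W * Aᵀ * colCat r (K + 2)).mulVec w
        = (A * W * Aᵀ).mulVec ((colCat r (K + 2)).mulVec w) := by
      rw [← Matrix.mulVec_mulVec]
    funext i
    rw [hsplit, ← Matrix.mulVec_mulVec, hsplit2, hS2w, Matrix.mulVec_add, Matrix.mulVec_smul,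
      Matrix.mulVec_smul, ← hAp1, hApr, colCat_tr_mulVec, colCat_tr_mulVec, dotProduct_add,
      dotProduct_smul, dotProduct_smul, smul_eq_mul, smul_eq_mul]
    rcases lt_or_ge (i : ℕ) K with hiv | hiv
    · rw [dotProduct_sub, horth i K hiv (by omega), horth i (K + 1) (by omega) (by omega),
        hAWA, hKry i (by omega)]
      ring
    · rcases eq_or_lt_of_le hiv with hiv2 | hiv2
      · rw [← hiv2, dotProduct_sub, horth K (K + 1) (by omega) (by omega), hAWA, sub_zero]
        have hθτ : θ * (r (K + 1) ⬝ᵥ (A * W * Aᵀ).mulVec (r K)) = -ρ * (r K ⬝ᵥ r K) := by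
          rw [hθc]
          calc c1 ⟨K, by omega⟩ * (r K ⬝ᵥ r K) * (r (K + 1) ⬝ᵥ (A * W * Aᵀ).mulVec (r K))
              = c1 ⟨K, by omega⟩ * (r (K + 1) ⬝ᵥ (A * W * Aᵀ).mulVec (r K)) * (r K ⬝ᵥ r K) := by
                ring
            _ = -ρ * (r K ⬝ᵥ r K) := by rw [hτ]
        field_simp
        linear_combination ρ * hθτ
      · have hik : (i : ℕ) = K + 1 := by omega
        rw [hik, dotProduct_sub, dotProduct_comm (r (K + 1)) (r K),
          horth K (K + 1) (by omega) (by omega), ← hρ', hphi2, zero_sub]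
        field_simp
        ring
  have hp2 : p (K + 2) = (W * Aᵀ * colCat r (K + 2)).mulVec
      (((colCat r (K + 2))ᵀ * A * W * Aᵀ * colCat r (K + 2))⁻¹.mulVec
        ((colCat r (K + 2))ᵀ.mulVec (r (K + 1)))) := hp (K + 2) (by omega) le_rfl
  rw [← hGw, hGinv' (K + 2) (by omega) le_rfl w] at hp2
  have hfin : (W * Aᵀ * colCat r (K + 2)).mulVec w
      = (ρ ^ 2 / (θ * φ - ρ ^ 2)) • p (K + 1)
        + (θ * ρ / (θ * φ - ρ ^ 2)) • W.mulVec y := by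
    rw [← Matrix.mulVec_mulVec, hS2w, Matrix.mulVec_add, Matrix.mulVec_smul, Matrix.mulVec_smul,
      Matrix.mulVec_mulVec, ← hp1, ← Matrix.mulVec_mulVec, ← hy']
  exact hp2.trans hfin
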